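/- arXiv:2403.06958 — 3 statements merged into one kernel-verified Lean document; each statement's English description precedes it below -/
import Mathlib

section
/- Let c = 1/2 + √313/26 and define φ(X) = (−35/24 + (35/312)√313) · sech⁴( (1/24)√(−26 + 2√313) · X ) for X ∈ ℝ. Then φ is a smooth solution on ℝ of the solitary-wave profile equation of the Rosenau–KdV equation: −c φ'''' + φ'' + (1 − c) φ + φ²/2 = 0, and φ(X) → 0 as |X| → ∞. -/
open Filter

lemma hasDerivAt_sech_pow (k : ℝ) (n : ℕ) (X : ℝ) :
    HasDerivAt (fun Y => ((Real.cosh (k * Y))⁻¹) ^ (n+1))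
      (-((n:ℝ)+1) * k * Real.sinh (k*X) * ((Real.cosh (k*X))⁻¹) ^ (n+2)) X := by
  have hcosh : HasDerivAt (fun Y => Real.cosh (k * Y)) (k * Real.sinh (k*X)) X := by
    have := (Real.hasDerivAt_cosh (k*X)).comp X ((hasDerivAt_id X).const_mul k)
    exact this.congr_deriv (by simp [mul_comm])
  have hne : Real.cosh (k*X) ≠ 0 := (Real.cosh_pos _).ne'
  have h2 := (hcosh.inv hne).pow (n+1)
  refine h2.congr_deriv (Eq.symm ?_)
  simp only [Pi.inv_apply, Nat.add_sub_cancel]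
  push_cast
  ring

lemma hasDerivAt_sinh_sech (k : ℝ) (m : ℕ) (X : ℝ) :
    HasDerivAt (fun Y => Real.sinh (k*Y) * ((Real.cosh (k*Y))⁻¹)^(m+2))
      (-((m:ℝ)+1) * k * ((Real.cosh (k*X))⁻¹)^(m+1)
        + ((m:ℝ)+2) * k * ((Real.cosh (k*X))⁻¹)^(m+3)) X := by
  have hsinh : HasDerivAt (fun Y => Real.sinh (k * Y)) (k * Real.cosh (k*X)) X := by
    have := (Real.hasDerivAt_sinh (k*X)).comp X ((hasDerivAt_id X).const_mul k)
    exact this.congr_deriv (by simp [mul_comm])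
  have hne : Real.cosh (k*X) ≠ 0 := (Real.cosh_pos _).ne'
  have h2 := hsinh.mul (hasDerivAt_sech_pow k (m+1) X)
  refine h2.congr_deriv (Eq.symm ?_)
  have hc2 : Real.cosh (k*X)^2 - Real.sinh (k*X)^2 = 1 := Real.cosh_sq_sub_sinh_sq _
  have hus : Real.cosh (k*X) * (Real.cosh (k*X))⁻¹ = 1 := mul_inv_cancel₀ hne
  set u := Real.cosh (k*X)
  set s := (Real.cosh (k*X))⁻¹
  set v := Real.sinh (k*X)
  push_cast
  linear_combination (-((m:ℝ)+2))*k*s^(m+3)*hc2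
    + ((-(k)*s^(m+1)) + ((m:ℝ)+2)*k*s^(m+1)*(u*s+1))*hus


/-- the explicit `sech⁴` profile with speed `c = 1/2 + √313/26` is a smooth
solution of the solitary-wave profile equation `−c φ'''' + φ'' + (1 − c) φ + φ²/2 = 0`
of the Rosenau–KdV equation, decaying to `0` at infinity. -/
theorem rosenauKdV_exact_solitary_wave (c : ℝ) (hc : c = 1 / 2 + Real.sqrt 313 / 26)
    (φ : ℝ → ℝ)
    (hφ : ∀ X : ℝ, φ X = (-35 / 24 + (35 / 312) * Real.sqrt 313) *
      ((Real.cosh ((1 / 24) * Real.sqrt (-26 + 2 * Real.sqrt 313) * X))⁻¹) ^ 4) :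
    ContDiff ℝ (⊤ : ℕ∞) φ ∧
    (∀ X : ℝ, -c * iteratedDeriv 4 φ X + iteratedDeriv 2 φ X + (1 - c) * φ X
      + (φ X) ^ 2 / 2 = 0) ∧
    Tendsto φ (cocompact ℝ) (nhds 0) := by
  set r : ℝ := Real.sqrt 313 with hrdef
  have hr : r ^ 2 = 313 := Real.sq_sqrt (by norm_num)
  have hr0 : 0 ≤ r := Real.sqrt_nonneg _
  have hr13 : 13 < r := by nlinarith
  set k : ℝ := 1 / 24 * Real.sqrt (-26 + 2 * r) with hkdef
  set A : ℝ := -35 / 24 + 35 / 312 * r with hAdef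
  have htnn : (0:ℝ) ≤ -26 + 2 * r := by linarith
  have hk2 : k ^ 2 = (-26 + 2 * r) / 576 := by
    rw [hkdef, mul_pow, Real.sq_sqrt htnn]; ring
  have hkpos : 0 < k := by
    rw [hkdef]
    have : 0 < Real.sqrt (-26 + 2 * r) := Real.sqrt_pos.2 (by linarith)
    positivity
  have hφf : φ = fun X => A * ((Real.cosh (k * X))⁻¹) ^ 4 := funext hφ
  subst hφf
  -- derivatives
  have h1 : ∀ X : ℝ, HasDerivAt (fun X => A * ((Real.cosh (k * X))⁻¹) ^ 4)
      (-4*A*k * (Real.sinh (k*X) * ((Real.cosh (k*X))⁻¹)^5)) X := by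
    intro X
    have h := (hasDerivAt_sech_pow k 3 X).const_mul A
    refine h.congr_deriv (Eq.symm ?_)
    push_cast
    ring
  have e1 : deriv (fun X => A * ((Real.cosh (k * X))⁻¹) ^ 4)
      = fun X => -4*A*k * (Real.sinh (k*X) * ((Real.cosh (k*X))⁻¹)^5) :=
    funext fun X => (h1 X).deriv
  have h2 : ∀ X : ℝ, HasDerivAt (fun X => -4*A*k * (Real.sinh (k*X) * ((Real.cosh (k*X))⁻¹)^5))
      (16*A*k^2 * ((Real.cosh (k*X))⁻¹)^4 - 20*A*k^2 * ((Real.cosh (k*X))⁻¹)^6) X := by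
    intro X
    have h := (hasDerivAt_sinh_sech k 3 X).const_mul (-4*A*k)
    refine h.congr_deriv (Eq.symm ?_)
    push_cast
    ring
  have e2 : deriv (deriv (fun X => A * ((Real.cosh (k * X))⁻¹) ^ 4))
      = fun X => 16*A*k^2 * ((Real.cosh (k*X))⁻¹)^4 - 20*A*k^2 * ((Real.cosh (k*X))⁻¹)^6 := by
    rw [e1]; exact funext fun X => (h2 X).deriv
  have h3 : ∀ X : ℝ, HasDerivAt
      (fun X => 16*A*k^2 * ((Real.cosh (k*X))⁻¹)^4 - 20*A*k^2 * ((Real.cosh (k*X))⁻¹)^6)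
      (-64*A*k^3 * (Real.sinh (k*X) * ((Real.cosh (k*X))⁻¹)^5)
        + 120*A*k^3 * (Real.sinh (k*X) * ((Real.cosh (k*X))⁻¹)^7)) X := by
    intro X
    have ha := (hasDerivAt_sech_pow k 3 X).const_mul (16*A*k^2)
    have hb := (hasDerivAt_sech_pow k 5 X).const_mul (20*A*k^2)
    have h := ha.sub hb
    refine h.congr_deriv (Eq.symm ?_)
    push_cast
    ring
  have e3 : deriv (deriv (deriv (fun X => A * ((Real.cosh (k * X))⁻¹) ^ 4)))
      = fun X => -64*A*k^3 * (Real.sinh (k*X) * ((Real.cosh (k*X))⁻¹)^5)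
        + 120*A*k^3 * (Real.sinh (k*X) * ((Real.cosh (k*X))⁻¹)^7) := by
    rw [e2]; exact funext fun X => (h3 X).deriv
  have h4 : ∀ X : ℝ, HasDerivAt
      (fun X => -64*A*k^3 * (Real.sinh (k*X) * ((Real.cosh (k*X))⁻¹)^5)
        + 120*A*k^3 * (Real.sinh (k*X) * ((Real.cosh (k*X))⁻¹)^7))
      (256*A*k^4 * ((Real.cosh (k*X))⁻¹)^4 - 1040*A*k^4 * ((Real.cosh (k*X))⁻¹)^6
        + 840*A*k^4 * ((Real.cosh (k*X))⁻¹)^8) X := by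
    intro X
    have ha := (hasDerivAt_sinh_sech k 3 X).const_mul (-64*A*k^3)
    have hb := (hasDerivAt_sinh_sech k 5 X).const_mul (120*A*k^3)
    have h := ha.add hb
    refine h.congr_deriv (Eq.symm ?_)
    push_cast
    ring
  have e4 : deriv (deriv (deriv (deriv (fun X => A * ((Real.cosh (k * X))⁻¹) ^ 4))))
      = fun X => 256*A*k^4 * ((Real.cosh (k*X))⁻¹)^4 - 1040*A*k^4 * ((Real.cosh (k*X))⁻¹)^6
        + 840*A*k^4 * ((Real.cosh (k*X))⁻¹)^8 := by
    rw [e3]; exact funext fun X => (h4 X).deriv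
  refine ⟨?_, ?_, ?_⟩
  · -- smoothness
    exact contDiff_const.mul
      (((Real.contDiff_cosh.comp (contDiff_const.mul contDiff_id)).inv
        (fun x => (Real.cosh_pos _).ne')).pow 4)
  · -- the ODE
    intro X
    have hit2 : iteratedDeriv 2 (fun X => A * ((Real.cosh (k * X))⁻¹) ^ 4)
        = deriv (deriv (fun X => A * ((Real.cosh (k * X))⁻¹) ^ 4)) := by
      rw [show (2:ℕ) = 1 + 1 from rfl, iteratedDeriv_succ, iteratedDeriv_one]
    have hit4 : iteratedDeriv 4 (fun X => A * ((Real.cosh (k * X))⁻¹) ^ 4)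
        = deriv (deriv (deriv (deriv (fun X => A * ((Real.cosh (k * X))⁻¹) ^ 4)))) := by
      rw [show (4:ℕ) = 3 + 1 from rfl, iteratedDeriv_succ,
        show (3:ℕ) = 2 + 1 from rfl, iteratedDeriv_succ,
        show (2:ℕ) = 1 + 1 from rfl, iteratedDeriv_succ, iteratedDeriv_one]
    rw [hit2, hit4, e4, e2]
    simp only
    set s : ℝ := (Real.cosh (k*X))⁻¹ with hsdef
    have hk4 : k ^ 4 = ((-26 + 2*r)/576) ^ 2 := by
      rw [show k^4 = (k^2)^2 by ring, hk2]
    have hco4 : -c*(256*A*k^4) + 16*A*k^2 + (1-c)*A = 0 := by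
      rw [hc, hAdef, hk2, hk4]
      linear_combination ((-35/2628288)*r^2 + (35/101088)*r - 35/15552) * hr
    have hco6 : -c*(-1040*A*k^4) - 20*A*k^2 = 0 := by
      rw [hc, hAdef, hk2, hk4]
      linear_combination ((175/3234816)*r^2 - (175/124416)*r + 2275/248832) * hr
    have hco8 : -c*(840*A*k^4) + A^2/2 = 0 := by
      rw [hc, hAdef, hk4]
      linear_combination ((-1225/28035072)*r^2 + (1225/1078272)*r - 1225/165888) * hr
    linear_combination s^4*hco4 + s^6*hco6 + s^8*hco8
  · -- decay
    have hexp : Tendsto (fun X : ℝ => Real.exp (k * ‖X‖) / 2) (cocompact ℝ) atTop :=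
      (Real.tendsto_exp_atTop.comp
        (tendsto_norm_cocompact_atTop.const_mul_atTop hkpos)).atTop_div_const (by norm_num)
    have hcoshT : Tendsto (fun X => Real.cosh (k*X)) (cocompact ℝ) atTop := by
      refine tendsto_atTop_mono (fun X => ?_) hexp
      have habs : k * ‖X‖ = |k * X| := by
        rw [Real.norm_eq_abs, abs_mul, abs_of_pos hkpos]
      rw [habs, Real.cosh_eq]
      rcases abs_cases (k*X) with ⟨h, _⟩ | ⟨h, _⟩ <;> rw [h] <;>
        nlinarith [Real.exp_pos (k*X), Real.exp_pos (-(k*X))]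
    have hs0 : Tendsto (fun X => ((Real.cosh (k*X))⁻¹)) (cocompact ℝ) (nhds 0) :=
      hcoshT.inv_tendsto_atTop
    have := (hs0.pow 4).const_mul A
    simpa using this
end

section
/- Let q > 2, let G : ℝ → ℝ be continuous, homogeneous of degree q, with |G(s)| ≤ C₀|s|^q, suppose F(u₀) > 0 for some u₀ ∈ H²(ℝ), and let E : H²(ℝ) → ℝ satisfy C₁‖u‖²_{H²} ≤ E(u) ≤ C₂‖u‖²_{H²} for all u ∈ H²(ℝ) with constants C₁, C₂ > 0, and be homogeneous of degree 2. Then for every λ > 0 and every θ ∈ (0, λ), the values I_μ = inf{E(u) : u ∈ H²(ℝ), F(u) = μ} satisfy the strict subadditivity inequality I_λ < I_θ + I_{λ−θ}. -/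
/-!
Rescaling `u ↦ t u` maps the constraint `F = μ` onto `F = t^q μ` and multiplies `E` by `t²`,
so `I_{σμ} = σ^{2/q} I_μ`. A Sobolev bound `‖u‖_∞² ≤ ‖u‖²_{H²}` turns `|G(s)| ≤ C₀|s|^q` into
`μ ≤ C₀ ‖u‖_{H²}^q` on the constraint set, whence `I_μ ≥ C₁ (μ/C₀)^{2/q} > 0`. With `τ = θ/λ`,
`I_θ + I_{λ-θ} = (τ^{2/q} + (1-τ)^{2/q}) I_λ`, and the factor exceeds `1` because `2/q < 1`.
-/

open MeasureTheory Filter Set Pointwise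

/-- Membership in the Sobolev space `H²(ℝ)`: `u`, `u'`, `u''` are square integrable. -/
def InH2 (u : ℝ → ℝ) : Prop :=
  Differentiable ℝ u ∧ Differentiable ℝ (deriv u) ∧
  MemLp u 2 volume ∧ MemLp (deriv u) 2 volume ∧ MemLp (deriv (deriv u)) 2 volume

/-- The squared `H²(ℝ)` norm: `‖u‖²_{H²} = ∫ (u² + (u')² + (u'')²)`. -/
noncomputable def H2normSq (u : ℝ → ℝ) : ℝ :=
  ∫ x : ℝ, ((u x) ^ 2 + (deriv u x) ^ 2 + (deriv (deriv u) x) ^ 2)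

/-- The constraint functional `F(u) = ∫ G(u)`. -/
noncomputable def Ffun (G : ℝ → ℝ) (u : ℝ → ℝ) : ℝ := ∫ x : ℝ, G (u x)

/-- The constrained infimum `I_μ = inf {E(u) : u ∈ H²(ℝ), F(u) = μ}`. -/
noncomputable def Iinf (E : (ℝ → ℝ) → ℝ) (G : ℝ → ℝ) (mu : ℝ) : ℝ :=
  sInf (E '' {u : ℝ → ℝ | InH2 u ∧ Ffun G u = mu})

def constraintSet (G : ℝ → ℝ) (μ : ℝ) : Set (ℝ → ℝ) := {u | InH2 u ∧ Ffun G u = μ}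

lemma Iinf_eq_sInf_image_constraintSet (E : (ℝ → ℝ) → ℝ) (G : ℝ → ℝ) (μ : ℝ) :
    Iinf E G μ = sInf (E '' constraintSet G μ) := rfl

lemma InH2.const_mul {u : ℝ → ℝ} (hu : InH2 u) (t : ℝ) : InH2 (fun x => t * u x) := by
  obtain ⟨hd, hd', h0, h1, h2⟩ := hu
  simp only [InH2, deriv_const_mul_field']
  exact ⟨hd.const_mul t, hd'.const_mul t, h0.const_mul t, h1.const_mul t, h2.const_mul t⟩

lemma sq_le_integral_sq_add_deriv_sq {u : ℝ → ℝ} (hu : Differentiable ℝ u)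
    (h0 : MemLp u 2 volume) (h1 : MemLp (deriv u) 2 volume) (x : ℝ) :
    u x ^ 2 ≤ ∫ y, (u y ^ 2 + deriv u y ^ 2) := by
  have hsum : Integrable (fun y => u y ^ 2 + deriv u y ^ 2) :=
    h0.integrable_sq.add h1.integrable_sq
  have hbound : ∀ y, |2 * u y * deriv u y| ≤ u y ^ 2 + deriv u y ^ 2 := fun y => by
    rw [abs_le]
    constructor <;> nlinarith [sq_nonneg (u y + deriv u y), sq_nonneg (u y - deriv u y)]
  have hint : Integrable (fun y => 2 * u y * deriv u y) :=
    hsum.mono' ((continuous_const.mul hu.continuous).aestronglyMeasurable.mul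
      h1.aestronglyMeasurable) (.of_forall hbound)
  have hderiv : ∀ y, HasDerivAt (fun y => u y ^ 2) (2 * u y * deriv u y) y := fun y => by
    simpa [mul_comm, mul_assoc] using (hu y).hasDerivAt.fun_pow 2
  have hlim : Tendsto (fun y => u y ^ 2) atBot (nhds 0) :=
    tendsto_zero_of_hasDerivAt_of_integrableOn_Iic (a := x) (fun y _ => hderiv y)
      hint.integrableOn h0.integrable_sq.integrableOn
  calc u x ^ 2 = ∫ y in Iic x, 2 * u y * deriv u y := by
        rw [integral_Iic_of_hasDerivAt_of_tendsto' (fun y _ => hderiv y) hint.integrableOn hlim,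
          sub_zero]
    _ ≤ ∫ y in Iic x, (u y ^ 2 + deriv u y ^ 2) :=
        setIntegral_mono hint.integrableOn hsum.integrableOn
          fun y => (le_abs_self _).trans (hbound y)
    _ ≤ ∫ y, (u y ^ 2 + deriv u y ^ 2) :=
        setIntegral_le_integral hsum (.of_forall fun y => by positivity)

lemma integral_sq_add_deriv_sq_le_H2normSq {u : ℝ → ℝ} (hu : InH2 u) :
    ∫ y, (u y ^ 2 + deriv u y ^ 2) ≤ H2normSq u := by
  obtain ⟨-, -, h0, h1, h2⟩ := hu
  exact integral_mono (h0.integrable_sq.add h1.integrable_sq)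
    ((h0.integrable_sq.add h1.integrable_sq).add h2.integrable_sq) fun y => by
      nlinarith [sq_nonneg (deriv (deriv u) y)]

lemma integral_sq_le_H2normSq {u : ℝ → ℝ} (hu : InH2 u) : ∫ y, u y ^ 2 ≤ H2normSq u := by
  have h0 := hu.2.2.1.integrable_sq
  refine le_trans (integral_mono h0 (h0.add hu.2.2.2.1.integrable_sq) fun y => ?_)
    (integral_sq_add_deriv_sq_le_H2normSq hu)
  simp only [Pi.add_apply]
  nlinarith [sq_nonneg (deriv u y)]

lemma InH2.sq_le_H2normSq {u : ℝ → ℝ} (hu : InH2 u) (x : ℝ) : u x ^ 2 ≤ H2normSq u :=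
  (sq_le_integral_sq_add_deriv_sq hu.1 hu.2.2.1 hu.2.2.2.1 x).trans
    (integral_sq_add_deriv_sq_le_H2normSq hu)

lemma H2normSq_nonneg (u : ℝ → ℝ) : 0 ≤ H2normSq u :=
  integral_nonneg fun x => by positivity

lemma abs_rpow_le_rpow_mul_sq {q s M : ℝ} (hq : 2 ≤ q) (hs : s ^ 2 ≤ M) :
    |s| ^ q ≤ M ^ (q / 2 - 1) * s ^ 2 := by
  have hsplit : |s| ^ q = (s ^ 2) ^ (q / 2 - 1) * s ^ 2 := by
    rw [← Real.rpow_add_one' (sq_nonneg s) (by linarith), sub_add_cancel, ← sq_abs s,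
      ← Real.rpow_natCast, ← Real.rpow_mul (abs_nonneg s), Nat.cast_ofNat,
      mul_div_cancel₀ q two_ne_zero]
  rw [hsplit]
  gcongr
  linarith

lemma Ffun_le_mul_H2normSq_rpow {q C₀ : ℝ} {G : ℝ → ℝ} (hq : 2 ≤ q) (hC₀ : 0 ≤ C₀)
    (hG : ∀ s, |G s| ≤ C₀ * |s| ^ q) {u : ℝ → ℝ} (hu : InH2 u) :
    Ffun G u ≤ C₀ * H2normSq u ^ (q / 2) := by
  set M := H2normSq u
  have hM : 0 ≤ M := H2normSq_nonneg u
  -- Off the integrable case the Bochner integral `Ffun G u` is `0`.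
  by_cases hint : Integrable (fun x => G (u x))
  swap
  · rw [Ffun, integral_undef hint]; positivity
  have hpt : ∀ x, G (u x) ≤ C₀ * M ^ (q / 2 - 1) * u x ^ 2 := fun x => calc
    G (u x) ≤ C₀ * |u x| ^ q := (le_abs_self _).trans (hG _)
    _ ≤ C₀ * (M ^ (q / 2 - 1) * u x ^ 2) := by
        gcongr; exact abs_rpow_le_rpow_mul_sq hq (hu.sq_le_H2normSq x)
    _ = _ := by ring
  calc Ffun G u ≤ ∫ x, C₀ * M ^ (q / 2 - 1) * u x ^ 2 :=
        integral_mono hint (hu.2.2.1.integrable_sq.const_mul _) hpt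
    _ = C₀ * M ^ (q / 2 - 1) * ∫ x, u x ^ 2 := integral_const_mul _ _
    _ ≤ C₀ * M ^ (q / 2 - 1) * M := by gcongr; exact integral_sq_le_H2normSq hu
    _ = C₀ * M ^ (q / 2) := by
        rw [mul_assoc, ← Real.rpow_add_one' hM (by linarith), sub_add_cancel]

lemma rpow_two_div_le_H2normSq {q C₀ : ℝ} {G : ℝ → ℝ} (hq : 2 ≤ q) (hC₀ : 0 < C₀)
    (hG : ∀ s, |G s| ≤ C₀ * |s| ^ q) {u : ℝ → ℝ} (hu : InH2 u) (hF : 0 ≤ Ffun G u) :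
    (Ffun G u / C₀) ^ (2 / q) ≤ H2normSq u := by
  rw [← inv_div q 2, Real.rpow_inv_le_iff_of_pos (by positivity) (H2normSq_nonneg u)
    (by linarith), div_le_iff₀' hC₀]
  exact Ffun_le_mul_H2normSq_rpow hq hC₀.le hG hu

lemma mul_rpow_two_div_le_Iinf {q C₀ C₁ μ : ℝ} {G : ℝ → ℝ} {E : (ℝ → ℝ) → ℝ} (hq : 2 ≤ q)
    (hC₀ : 0 < C₀) (hC₁ : 0 ≤ C₁) (hG : ∀ s, |G s| ≤ C₀ * |s| ^ q)
    (hE : ∀ u, InH2 u → C₁ * H2normSq u ≤ E u) (hμ : 0 ≤ μ)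
    (hne : (constraintSet G μ).Nonempty) :
    C₁ * (μ / C₀) ^ (2 / q) ≤ Iinf E G μ := by
  rw [Iinf_eq_sInf_image_constraintSet]
  refine le_csInf (hne.image E) ?_
  rintro _ ⟨u, ⟨hu, rfl⟩, rfl⟩
  exact (mul_le_mul_of_nonneg_left (rpow_two_div_le_H2normSq hq hC₀ hG hu hμ) hC₁).trans
    (hE u hu)

section Scaling

variable {q : ℝ} {G : ℝ → ℝ}

lemma Ffun_const_mul (hhom : ∀ t : ℝ, 0 < t → ∀ s : ℝ, G (t * s) = t ^ q * G s)
    {t : ℝ} (ht : 0 < t) (u : ℝ → ℝ) :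
    Ffun G (fun x => t * u x) = t ^ q * Ffun G u := by
  simp only [Ffun, hhom t ht]
  exact integral_const_mul _ _

lemma constraintSet_rpow_mul (hhom : ∀ t : ℝ, 0 < t → ∀ s : ℝ, G (t * s) = t ^ q * G s)
    {t : ℝ} (ht : 0 < t) (μ : ℝ) :
    constraintSet G (t ^ q * μ) = (fun u x => t * u x) '' constraintSet G μ := by
  ext u
  constructor
  · rintro ⟨hu, hFu⟩
    refine ⟨fun x => t⁻¹ * u x, ⟨hu.const_mul _, ?_⟩, ?_⟩
    · rw [Ffun_const_mul hhom (inv_pos.2 ht), hFu, Real.inv_rpow ht.le,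
        inv_mul_cancel_left₀ (by positivity)]
    · funext x; field_simp
  · rintro ⟨v, ⟨hv, hFv⟩, rfl⟩
    exact ⟨hv.const_mul t, by rw [Ffun_const_mul hhom ht, hFv]⟩

lemma constraintSet_nonempty (hq : q ≠ 0)
    (hhom : ∀ t : ℝ, 0 < t → ∀ s : ℝ, G (t * s) = t ^ q * G s)
    {u₀ : ℝ → ℝ} (hu₀ : InH2 u₀) (hF : 0 < Ffun G u₀) {μ : ℝ} (hμ : 0 < μ) :
    (constraintSet G μ).Nonempty := by
  have ht : 0 < (μ / Ffun G u₀) ^ q⁻¹ := by positivity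
  have hμ_eq : μ = ((μ / Ffun G u₀) ^ q⁻¹) ^ q * Ffun G u₀ := by
    rw [Real.rpow_inv_rpow (by positivity) hq, div_mul_cancel₀ _ hF.ne']
  rw [hμ_eq, constraintSet_rpow_mul hhom ht]
  exact Nonempty.image _ ⟨u₀, hu₀, rfl⟩

lemma Iinf_rpow_mul (hhom : ∀ t : ℝ, 0 < t → ∀ s : ℝ, G (t * s) = t ^ q * G s)
    {E : (ℝ → ℝ) → ℝ} (hEquad : ∀ t : ℝ, 0 < t → ∀ u : ℝ → ℝ, E (fun x => t * u x) = t ^ 2 * E u)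
    {t : ℝ} (ht : 0 < t) (μ : ℝ) :
    Iinf E G (t ^ q * μ) = t ^ 2 * Iinf E G μ := by
  have himage : E '' constraintSet G (t ^ q * μ) = (t ^ 2) • E '' constraintSet G μ := by
    rw [constraintSet_rpow_mul hhom ht, image_image, ← image_smul, image_image]
    exact image_congr fun u _ => hEquad t ht u
  rw [Iinf_eq_sInf_image_constraintSet, himage, Real.sInf_smul_of_nonneg (by positivity),
    smul_eq_mul, Iinf_eq_sInf_image_constraintSet]

lemma Iinf_mul (hq : q ≠ 0) (hhom : ∀ t : ℝ, 0 < t → ∀ s : ℝ, G (t * s) = t ^ q * G s)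
    {E : (ℝ → ℝ) → ℝ} (hEquad : ∀ t : ℝ, 0 < t → ∀ u : ℝ → ℝ, E (fun x => t * u x) = t ^ 2 * E u)
    {σ : ℝ} (hσ : 0 < σ) (μ : ℝ) :
    Iinf E G (σ * μ) = σ ^ (2 / q) * Iinf E G μ := by
  have h := Iinf_rpow_mul hhom hEquad (t := σ ^ q⁻¹) (by positivity) μ
  rwa [Real.rpow_inv_rpow hσ.le hq, ← Real.rpow_natCast, ← Real.rpow_mul hσ.le,
    Nat.cast_ofNat, inv_mul_eq_div] at h

end Scaling

lemma lt_add_of_rpow_homogeneous {I : ℝ → ℝ} {p lam θ : ℝ} (hp : p < 1)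
    (hI : ∀ σ, 0 < σ → I (σ * lam) = σ ^ p * I lam) (hpos : 0 < I lam)
    (hθ : 0 < θ) (hθlam : θ < lam) :
    I lam < I θ + I (lam - θ) := by
  have hlam : 0 < lam := hθ.trans hθlam
  set τ := θ / lam
  have hτ0 : 0 < τ := by positivity
  have hτ1 : τ < 1 := (div_lt_one hlam).2 hθlam
  have hθ_eq : θ = τ * lam := (div_mul_cancel₀ θ hlam.ne').symm
  have hrest_eq : lam - θ = (1 - τ) * lam := by rw [sub_mul, one_mul, ← hθ_eq]
  have hkey : 1 < τ ^ p + (1 - τ) ^ p := by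
    linarith [Real.self_lt_rpow_of_lt_one hτ0 hτ1 hp,
      Real.self_lt_rpow_of_lt_one (sub_pos.2 hτ1) (by linarith) hp]
  rw [hrest_eq, hθ_eq, hI τ hτ0, hI (1 - τ) (by linarith), ← add_mul]
  nlinarith

theorem rosenau_Iinf_strict_subadd_general (q : ℝ) (hq : 2 < q)
    (G : ℝ → ℝ)
    (hhom : ∀ t : ℝ, 0 < t → ∀ s : ℝ, G (t * s) = t ^ q * G s)
    (C₀ : ℝ) (hC₀ : 0 < C₀) (hG : ∀ s : ℝ, |G s| ≤ C₀ * |s| ^ q)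
    (hF : ∃ u₀ : ℝ → ℝ, InH2 u₀ ∧ 0 < Ffun G u₀)
    (E : (ℝ → ℝ) → ℝ) (C₁ C₂ : ℝ) (hC₁ : 0 < C₁)
    (hE : ∀ u : ℝ → ℝ, InH2 u → C₁ * H2normSq u ≤ E u ∧ E u ≤ C₂ * H2normSq u)
    (hEquad : ∀ t : ℝ, 0 < t → ∀ u : ℝ → ℝ, E (fun x => t * u x) = t ^ 2 * E u) :
    ∀ lam : ℝ, 0 < lam → ∀ θ : ℝ, 0 < θ → θ < lam →
      Iinf E G lam < Iinf E G θ + Iinf E G (lam - θ) := by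
  intro lam hlam θ hθ hθlam
  obtain ⟨u₀, hu₀, hFu₀⟩ := hF
  have hq0 : q ≠ 0 := by positivity
  have hne : (constraintSet G lam).Nonempty := constraintSet_nonempty hq0 hhom hu₀ hFu₀ hlam
  have hIpos : 0 < Iinf E G lam := lt_of_lt_of_le (by positivity)
    (mul_rpow_two_div_le_Iinf hq.le hC₀ hC₁.le hG (fun u hu => (hE u hu).1) hlam.le hne)
  exact lt_add_of_rpow_homogeneous ((div_lt_one (by positivity)).2 hq)
    (fun σ hσ => Iinf_mul hq0 hhom hEquad hσ lam) hIpos hθ hθlam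

/-- strict subadditivity `I_λ < I_θ + I_{λ−θ}` for `0 < θ < λ`. -/
theorem rosenau_Iinf_strict_subadd (q : ℝ) (hq : 2 < q)
    (G : ℝ → ℝ) (hGc : Continuous G)
    (hhom : ∀ t : ℝ, 0 < t → ∀ s : ℝ, G (t * s) = t ^ q * G s)
    (C₀ : ℝ) (hC₀ : 0 < C₀) (hG : ∀ s : ℝ, |G s| ≤ C₀ * |s| ^ q)
    (hF : ∃ u₀ : ℝ → ℝ, InH2 u₀ ∧ 0 < Ffun G u₀)
    (E : (ℝ → ℝ) → ℝ) (C₁ C₂ : ℝ) (hC₁ : 0 < C₁) (hC₂ : 0 < C₂)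
    (hE : ∀ u : ℝ → ℝ, InH2 u → C₁ * H2normSq u ≤ E u ∧ E u ≤ C₂ * H2normSq u)
    (hEquad : ∀ t : ℝ, 0 < t → ∀ u : ℝ → ℝ, E (fun x => t * u x) = t ^ 2 * E u) :
    ∀ lam : ℝ, 0 < lam → ∀ θ : ℝ, 0 < θ → θ < lam →
      Iinf E G lam < Iinf E G θ + Iinf E G (lam - θ) :=
  rosenau_Iinf_strict_subadd_general q hq G hhom C₀ hC₀ hG hF E C₁ C₂ hC₁ hE hEquad
end

section
/- Let ε > 0, α < 0, c > ε, and β = 36 c α² / (169 (c − ε)). Define φ(X) = (35/12)(c − ε) · sech⁴( √( 13(ε − c)/(144 c α) ) · X ) for X ∈ ℝ (the argument of the square root is positive since ε − c < 0 and α < 0). Then φ is a smooth solution on ℝ of the solitary-wave profile equation of the Rosenau–RLW equation: −βc φ'''' − αc φ'' + (ε − c) φ + φ²/2 = 0, and φ(X) → 0 as |X| → ∞; equivalently, u(x,t) = φ(x − ct) is an exact solitary-wave solution of u_t + ε u_x + α u_{xxt} + β u_{xxxxt} + (u²/2)_x = 0. -/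
open Filter

section RosenauAux

lemma hd_cosh' (k X : ℝ) : HasDerivAt (fun X => Real.cosh (k*X)) (k * Real.sinh (k*X)) X := by
  exact ((Real.hasDerivAt_cosh (k*X)).comp X ((hasDerivAt_id X).const_mul k)).congr_deriv (by ring)

lemma hd_sinh' (k X : ℝ) : HasDerivAt (fun X => Real.sinh (k*X)) (k * Real.cosh (k*X)) X := by
  exact ((Real.hasDerivAt_sinh (k*X)).comp X ((hasDerivAt_id X).const_mul k)).congr_deriv (by ring)

lemma hd_sechpow (k : ℝ) (n : ℕ) (X : ℝ) :
    HasDerivAt (fun X => ((Real.cosh (k*X))⁻¹)^n)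
      (-(n:ℝ) * (k * Real.sinh (k*X)) * ((Real.cosh (k*X))⁻¹)^(n+1)) X := by
  have hpos : (0:ℝ) < Real.cosh (k*X) := Real.cosh_pos (k*X)
  have h := (hasDerivAt_zpow (-(n:ℤ)) (Real.cosh (k*X)) (Or.inl hpos.ne')).comp X (hd_cosh' k X)
  have hfun : ((fun x : ℝ => x ^ (-(n:ℤ))) ∘ fun X => Real.cosh (k*X))
      = fun X => ((Real.cosh (k*X))⁻¹)^n := by
    funext Y
    simp [Function.comp, zpow_neg, zpow_natCast, inv_pow]
  rw [hfun] at h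
  refine h.congr_deriv (Eq.symm ?_)
  rw [show (-(n:ℤ) - 1) = -((n:ℤ)+1) by ring, zpow_neg, ← inv_zpow,
    show ((n:ℤ)+1) = ((n+1 : ℕ) : ℤ) by push_cast; ring, zpow_natCast]
  push_cast
  ring

lemma sinh_mul_self' (x : ℝ) : Real.sinh x * Real.sinh x = Real.cosh x * Real.cosh x - 1 := by
  nlinarith [Real.sinh_sq x]

noncomputable def P0 (k A X : ℝ) : ℝ := A * ((Real.cosh (k*X))⁻¹)^4
noncomputable def P1 (k A X : ℝ) : ℝ :=
  A * (-4*k) * (Real.sinh (k*X) * ((Real.cosh (k*X))⁻¹)^5)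
noncomputable def P2 (k A X : ℝ) : ℝ :=
  A * k^2 * (16 * ((Real.cosh (k*X))⁻¹)^4 - 20 * ((Real.cosh (k*X))⁻¹)^6)
noncomputable def P3 (k A X : ℝ) : ℝ :=
  A * k^3 * (Real.sinh (k*X) * (-64 * ((Real.cosh (k*X))⁻¹)^5 + 120 * ((Real.cosh (k*X))⁻¹)^7))
noncomputable def P4 (k A X : ℝ) : ℝ :=
  A * (k^2)^2 * (256 * ((Real.cosh (k*X))⁻¹)^4 - 1040 * ((Real.cosh (k*X))⁻¹)^6
    + 840 * ((Real.cosh (k*X))⁻¹)^8)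
noncomputable def P5 (k A X : ℝ) : ℝ :=
  A * k^5 * (Real.sinh (k*X) * (-1024 * ((Real.cosh (k*X))⁻¹)^5
    + 6240 * ((Real.cosh (k*X))⁻¹)^7 - 6720 * ((Real.cosh (k*X))⁻¹)^9))

lemma hd0 (k A X : ℝ) : HasDerivAt (P0 k A) (P1 k A X) X := by
  have h := (hd_sechpow k 4 X).const_mul A
  refine h.congr_deriv (Eq.symm ?_)
  unfold P1; push_cast; ring

lemma hd1 (k A X : ℝ) : HasDerivAt (P1 k A) (P2 k A X) X := by
  have h := ((hd_sinh' k X).mul (hd_sechpow k 5 X)).const_mul (A * (-4*k))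
  refine h.congr_deriv (Eq.symm ?_)
  have hcs : Real.cosh (k*X) * (Real.cosh (k*X))⁻¹ = 1 := mul_inv_cancel₀ (Real.cosh_pos (k*X)).ne'
  have hs := sinh_mul_self' (k*X)
  unfold P2
  push_cast
  set C := Real.cosh (k*X)
  set I := C⁻¹
  linear_combination (-20*A*k^2*I^6) * hs + (4*A*k^2*I^4 - 20*A*k^2*I^4*(C*I+1)) * hcs

lemma hd2 (k A X : ℝ) : HasDerivAt (P2 k A) (P3 k A X) X := by
  have h := (((hd_sechpow k 4 X).const_mul 16).sub ((hd_sechpow k 6 X).const_mul 20)).const_mul (A * k^2)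
  refine h.congr_deriv (Eq.symm ?_)
  unfold P3; push_cast; ring

lemma hd3 (k A X : ℝ) : HasDerivAt (P3 k A) (P4 k A X) X := by
  have h := ((hd_sinh' k X).mul
    (((hd_sechpow k 5 X).const_mul (-64)).add ((hd_sechpow k 7 X).const_mul 120))).const_mul (A * k^3)
  refine h.congr_deriv (Eq.symm ?_)
  have hcs : Real.cosh (k*X) * (Real.cosh (k*X))⁻¹ = 1 := mul_inv_cancel₀ (Real.cosh_pos (k*X)).ne'
  have hs := sinh_mul_self' (k*X)
  unfold P4
  simp only [Pi.add_apply]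
  push_cast
  set C := Real.cosh (k*X)
  set I := C⁻¹
  linear_combination (A*(k^2)^2*(-320*I^6+840*I^8)) * hs + (A*(k^2)^2*(64*I^4 - 120*I^6 - 320*I^4*(C*I+1) + 840*I^6*(C*I+1))) * hcs

lemma hd4 (k A X : ℝ) : HasDerivAt (P4 k A) (P5 k A X) X := by
  have h := ((((hd_sechpow k 4 X).const_mul 256).sub ((hd_sechpow k 6 X).const_mul 1040)).add
    ((hd_sechpow k 8 X).const_mul 840)).const_mul (A * (k^2)^2)
  refine h.congr_deriv (Eq.symm ?_)
  unfold P5; push_cast; ring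

lemma key_ode (ε α c β A K s : ℝ) (hε : 0 < ε) (hα : α < 0) (hc : ε < c)
    (hA : A = 35/12 * (c - ε)) (hK : K = 13 * (ε - c) / (144 * c * α))
    (hβ : β = 36 * c * α ^ 2 / (169 * (c - ε))) :
    -(β * c) * (A * K^2 * (256 * s^4 - 1040 * s^6 + 840 * s^8))
      - α * c * (A * K * (16 * s^4 - 20 * s^6))
      + (ε - c) * (A * s^4) + (A * s^4)^2 / 2 = 0 := by
  have hc0 : c ≠ 0 := by linarith
  have hα0 : α ≠ 0 := hα.ne
  have hcε : c - ε ≠ 0 := by linarith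
  subst hA hK hβ
  field_simp
  ring

end RosenauAux

/-- the explicit `sech⁴` profile is a smooth, decaying solution of the
solitary-wave profile equation `−βc φ'''' − αc φ'' + (ε − c)φ + φ²/2 = 0` of the
Rosenau–RLW equation; equivalently `u(x,t) = φ(x − ct)` is an exact solitary-wave solution
of `u_t + ε u_x + α u_{xxt} + β u_{xxxxt} + (u²/2)_x = 0`. -/
theorem rosenauRLW_exact_solitary_wave (ε α c β : ℝ)
    (hε : 0 < ε) (hα : α < 0) (hc : ε < c)
    (hβ : β = 36 * c * α ^ 2 / (169 * (c - ε)))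
    (φ : ℝ → ℝ)
    (hφ : ∀ X : ℝ, φ X = (35 / 12) * (c - ε) *
      ((Real.cosh (Real.sqrt (13 * (ε - c) / (144 * c * α)) * X))⁻¹) ^ 4) :
    ContDiff ℝ (⊤ : ℕ∞) φ ∧
    (∀ X : ℝ, -(β * c) * iteratedDeriv 4 φ X - α * c * iteratedDeriv 2 φ X
      + (ε - c) * φ X + (φ X) ^ 2 / 2 = 0) ∧
    Tendsto φ (cocompact ℝ) (nhds 0) ∧
    (∀ t x : ℝ,
      deriv (fun s : ℝ => φ (x - c * s)) t
      + ε * deriv (fun y : ℝ => φ (y - c * t)) x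
      + α * deriv (fun s : ℝ => deriv (deriv (fun y : ℝ => φ (y - c * s))) x) t
      + β * deriv (fun s : ℝ => iteratedDeriv 4 (fun y : ℝ => φ (y - c * s)) x) t
      + deriv (fun y : ℝ => (φ (y - c * t)) ^ 2 / 2) x = 0) := by
  set k : ℝ := Real.sqrt (13 * (ε - c) / (144 * c * α)) with hkdef
  set A : ℝ := 35 / 12 * (c - ε) with hAdef
  have harg : 0 < 13 * (ε - c) / (144 * c * α) := by
    apply div_pos_of_neg_of_neg <;> nlinarith
  have hk2 : k ^ 2 = 13 * (ε - c) / (144 * c * α) := Real.sq_sqrt harg.le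
  have hkpos : 0 < k := Real.sqrt_pos.mpr harg
  have hφfun : φ = P0 k A := by
    funext X
    rw [hφ]
    simp [P0, hAdef]
  -- function-level derivative identities
  have d0 : deriv (P0 k A) = P1 k A := funext fun X => (hd0 k A X).deriv
  have d1 : deriv (P1 k A) = P2 k A := funext fun X => (hd1 k A X).deriv
  have d2 : deriv (P2 k A) = P3 k A := funext fun X => (hd2 k A X).deriv
  have d3 : deriv (P3 k A) = P4 k A := funext fun X => (hd3 k A X).deriv
  have hit4 : ∀ g : ℝ → ℝ, iteratedDeriv 4 g = deriv (deriv (deriv (deriv g))) := by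
    intro g
    rw [show (4:ℕ) = 3+1 from rfl, iteratedDeriv_succ, show (3:ℕ) = 2+1 from rfl,
      iteratedDeriv_succ, show (2:ℕ) = 1+1 from rfl, iteratedDeriv_succ,
      show (1:ℕ) = 0+1 from rfl, iteratedDeriv_succ, iteratedDeriv_zero]
  have hit2 : ∀ g : ℝ → ℝ, iteratedDeriv 2 g = deriv (deriv g) := by
    intro g
    rw [show (2:ℕ) = 1+1 from rfl, iteratedDeriv_succ,
      show (1:ℕ) = 0+1 from rfl, iteratedDeriv_succ, iteratedDeriv_zero]
  refine ⟨?_, ?_, ?_, ?_⟩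
  · -- smoothness
    rw [hφfun]
    have h1 : ContDiff ℝ (⊤ : ℕ∞) (fun X : ℝ => Real.cosh (k*X)) :=
      Real.contDiff_cosh.comp (contDiff_const.mul contDiff_id)
    have h2 : ContDiff ℝ (⊤ : ℕ∞) (fun X : ℝ => ((Real.cosh (k*X))⁻¹)^4) :=
      (h1.inv fun X => (Real.cosh_pos (k*X)).ne').pow 4
    exact (contDiff_const.mul h2 : ContDiff ℝ (⊤ : ℕ∞) (P0 k A))
  · -- profile ODE
    intro X
    rw [hφfun, hit4, hit2, d0, d1, d2, d3]
    exact key_ode ε α c β A (k^2) ((Real.cosh (k*X))⁻¹) hε hα hc hAdef hk2 hβ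
  · -- decay
    rw [hφfun]
    have hcosh : Tendsto (fun X : ℝ => Real.cosh (k*X)) (cocompact ℝ) atTop := by
      have h1 : Tendsto (fun X : ℝ => |k*X|) (cocompact ℝ) atTop := by
        have h2 : Tendsto (fun X : ℝ => ‖X‖) (cocompact ℝ) atTop := tendsto_norm_cocompact_atTop
        have h3 := h2.const_mul_atTop (abs_pos.mpr hkpos.ne' : 0 < |k|)
        refine h3.congr fun X => ?_
        rw [Real.norm_eq_abs, abs_mul]
      have hexp : Tendsto (fun x : ℝ => Real.exp x / 2) atTop atTop :=
        Real.tendsto_exp_atTop.atTop_div_const two_pos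
      have hch : Tendsto Real.cosh atTop atTop :=
        tendsto_atTop_mono (fun x => by
          rw [Real.cosh_eq]; have := Real.exp_pos (-x); linarith) hexp
      have := hch.comp h1
      refine this.congr fun X => ?_
      simp only [Function.comp_apply, Real.cosh_abs]
    have h0 : Tendsto (fun X : ℝ => (Real.cosh (k*X))⁻¹) (cocompact ℝ) (nhds 0) :=
      tendsto_inv_atTop_zero.comp hcosh
    have h4 : Tendsto (fun X : ℝ => ((Real.cosh (k*X))⁻¹)^4) (cocompact ℝ) (nhds 0) := by
      simpa using h0.pow 4
    have h5 := h4.const_mul A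
    rw [mul_zero] at h5
    exact h5
  · -- the PDE for u(x,t) = φ(x - ct)
    intro t x
    rw [hφfun]
    have shift : ∀ (F G : ℝ → ℝ), (∀ Y, HasDerivAt F (G Y) Y) → ∀ (a y : ℝ),
        HasDerivAt (fun z => F (z - a)) (G (y - a)) y := by
      intro F G hF a y
      exact ((hF (y - a)).comp y ((hasDerivAt_id y).sub_const a)).congr_deriv (by ring)
    have shiftd : ∀ (F G : ℝ → ℝ), (∀ Y, HasDerivAt F (G Y) Y) → ∀ a : ℝ,
        (deriv fun z => F (z - a)) = fun z => G (z - a) :=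
      fun F G hF a => funext fun y => (shift F G hF a y).deriv
    have tshift : ∀ (F G : ℝ → ℝ), (∀ Y, HasDerivAt F (G Y) Y) → ∀ (x t : ℝ),
        HasDerivAt (fun s => F (x - c*s)) (G (x - c*t) * (-c)) t := by
      intro F G hF x t
      exact ((hF (x - c*t)).comp t (((hasDerivAt_id t).const_mul c).const_sub x)).congr_deriv (by ring)
    -- term 1
    have T1 : deriv (fun s : ℝ => P0 k A (x - c * s)) t = P1 k A (x - c*t) * (-c) :=
      (tshift _ _ (hd0 k A) x t).deriv
    -- term 2
    have T2 : deriv (fun y : ℝ => P0 k A (y - c * t)) x = P1 k A (x - c*t) :=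
      (shift _ _ (hd0 k A) (c*t) x).deriv
    -- term 3
    have E3 : (fun s : ℝ => deriv (deriv (fun y : ℝ => P0 k A (y - c * s))) x)
        = fun s : ℝ => P2 k A (x - c*s) := by
      funext s
      rw [shiftd _ _ (hd0 k A) (c*s), shiftd _ _ (hd1 k A) (c*s)]
    have T3 : deriv (fun s : ℝ => deriv (deriv (fun y : ℝ => P0 k A (y - c * s))) x) t
        = P3 k A (x - c*t) * (-c) := by
      rw [E3]
      exact (tshift _ _ (hd2 k A) x t).deriv
    -- term 4
    have E4 : (fun s : ℝ => iteratedDeriv 4 (fun y : ℝ => P0 k A (y - c * s)) x)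
        = fun s : ℝ => P4 k A (x - c*s) := by
      funext s
      rw [hit4, shiftd _ _ (hd0 k A) (c*s), shiftd _ _ (hd1 k A) (c*s),
        shiftd _ _ (hd2 k A) (c*s), shiftd _ _ (hd3 k A) (c*s)]
    have T4 : deriv (fun s : ℝ => iteratedDeriv 4 (fun y : ℝ => P0 k A (y - c * s)) x) t
        = P5 k A (x - c*t) * (-c) := by
      rw [E4]
      exact (tshift _ _ (hd4 k A) x t).deriv
    -- term 5
    have T5 : deriv (fun y : ℝ => (P0 k A (y - c * t)) ^ 2 / 2) x
        = P0 k A (x - c*t) * P1 k A (x - c*t) := by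
      have h := ((shift _ _ (hd0 k A) (c*t) x).pow 2).div_const 2
      refine h.deriv.trans ?_
      push_cast
      ring
    rw [T1, T2, T3, T4, T5]
    -- differentiate the profile ODE
    set ξ := x - c*t with hξ
    have hE : ∀ X : ℝ, -(β*c) * P4 k A X - α*c * P2 k A X + (ε - c) * P0 k A X
        + (P0 k A X)^2 / 2 = 0 := fun X =>
      key_ode ε α c β A (k^2) ((Real.cosh (k*X))⁻¹) hε hα hc hAdef hk2 hβ
    have hEfun : (fun X => -(β*c) * P4 k A X - α*c * P2 k A X + (ε - c) * P0 k A X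
        + (P0 k A X)^2 / 2) = fun _ => (0:ℝ) := funext hE
    have hV : HasDerivAt (fun X => -(β*c) * P4 k A X - α*c * P2 k A X + (ε - c) * P0 k A X
        + (P0 k A X)^2 / 2)
        (-(β*c) * P5 k A ξ - α*c * P3 k A ξ + (ε - c) * P1 k A ξ
          + (2 * P0 k A ξ ^ 1 * P1 k A ξ) / 2) ξ := by
      exact ((((hd4 k A ξ).const_mul (-(β*c))).sub ((hd2 k A ξ).const_mul (α*c))).add
        ((hd0 k A ξ).const_mul (ε - c))).add (((hd0 k A ξ).pow 2).div_const 2)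
    have hV0 : HasDerivAt (fun X => -(β*c) * P4 k A X - α*c * P2 k A X + (ε - c) * P0 k A X
        + (P0 k A X)^2 / 2) 0 ξ := by
      rw [hEfun]
      exact hasDerivAt_const ξ 0
    have hzero := hV.unique hV0
    push_cast at hzero
    linear_combination hzero
end
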